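/- Let G be a compact connected Lie group acting symplectically on (M, ω), and suppose the restriction of the action to every maximal torus of G admits a momentum map. Then the G-action admits a momentum map (and, after averaging, an equivariant one), i.e., the action is Hamiltonian. -/

import Mathlib

/-!
Every `ξ ∈ 𝔤` lies in the Lie algebra of a maximal torus, so `i_{ξ_M} ω` is exact. Hence the
image of `ξ ↦ i_{ξ_M} ω` lies in the image of `d`, and since `𝔤` is a free (so projective)
module the map lifts through `d` to a linear map `𝔤 → C^∞(M)`, which is a momentum map.
Averaging over `G` makes it equivariant.
-/

theorem Module.Projective.exists_comp_eq_of_range_le {R P M N : Type*} [Ring R]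
    [AddCommGroup P] [Module R P] [Module.Projective R P]
    [AddCommGroup M] [Module R M] [AddCommGroup N] [Module R N]
    (f : M →ₗ[R] N) (g : P →ₗ[R] N) (hfg : LinearMap.range g ≤ LinearMap.range f) :
    ∃ h : P →ₗ[R] M, f ∘ₗ h = g := by
  obtain ⟨h, hh⟩ := Module.projective_lifting_property f.rangeRestrict
    (g.codRestrict _ fun p => hfg ⟨p, rfl⟩) f.surjective_rangeRestrict
  refine ⟨h, LinearMap.ext fun p => ?_⟩
  simpa using congrArg Subtype.val (LinearMap.congr_fun hh p)

theorem stmt18_general {𝔤 M Ω G : Type*} [AddCommGroup 𝔤] [Module ℝ 𝔤]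
    [AddCommGroup Ω] [Module ℝ Ω] [Group G] [MulAction G M]
    (d : (M → ℝ) →ₗ[ℝ] Ω) (iω : 𝔤 →ₗ[ℝ] Ω)
    {ι : Type*} (t : ι → Submodule ℝ 𝔤)
    (hcover : ∀ ξ : 𝔤, ∃ i, ξ ∈ t i)
    (hHam : ∀ i, ∃ μ : M → Module.Dual ℝ (t i),
      ∀ ξ : (t i), iω ξ = d (fun x => μ x ξ))
    (coAd : G → Module.Dual ℝ 𝔤 → Module.Dual ℝ 𝔤)
    (havg : ∀ μ : M → Module.Dual ℝ 𝔤, (∀ ξ : 𝔤, iω ξ = d (fun x => μ x ξ)) →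
      ∃ μ' : M → Module.Dual ℝ 𝔤, (∀ ξ : 𝔤, iω ξ = d (fun x => μ' x ξ)) ∧
        ∀ (g : G) (x : M), μ' (g • x) = coAd g (μ' x)) :
    ∃ μ : M → Module.Dual ℝ 𝔤, (∀ ξ : 𝔤, iω ξ = d (fun x => μ x ξ)) ∧
      ∀ (g : G) (x : M), μ (g • x) = coAd g (μ x) := by
  have hexact : LinearMap.range iω ≤ LinearMap.range d := by
    rintro _ ⟨ξ, rfl⟩
    obtain ⟨i, hi⟩ := hcover ξ
    obtain ⟨μ, hμ⟩ := hHam i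
    exact ⟨_, (hμ ⟨ξ, hi⟩).symm⟩
  obtain ⟨L, hL⟩ := Module.Projective.exists_comp_eq_of_range_le d iω hexact
  exact havg (fun x => LinearMap.proj x ∘ₗ L) fun ξ => (LinearMap.congr_fun hL ξ).symm

/-- Let a compact connected Lie group `G` act symplectically on
`(M, ω)` and suppose the restriction of the action to every maximal torus admits a
momentum map.  Then the `G`-action admits a momentum map, and (after averaging)
an equivariant one, i.e. the action is Hamiltonian.  The Lie algebras of the
maximal tori are modelled by a family `t : ι → Submodule ℝ 𝔤` covering `𝔤`
(every element of a compact connected group lies in a maximal torus); `hHam` is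
the momentum map for each torus; `coAd` is the coadjoint action; `havg` encodes
the averaging theorem for compact groups (any momentum map can be averaged to an
equivariant one). -/
theorem stmt18 {𝔤 M Ω G : Type*} [AddCommGroup 𝔤] [Module ℝ 𝔤]
    [FiniteDimensional ℝ 𝔤]
    [AddCommGroup Ω] [Module ℝ Ω] [Group G] [MulAction G M]
    (d : (M → ℝ) →ₗ[ℝ] Ω) (iω : 𝔤 →ₗ[ℝ] Ω)
    {ι : Type*} (t : ι → Submodule ℝ 𝔤)
    (hcover : ∀ ξ : 𝔤, ∃ i, ξ ∈ t i)
    (hHam : ∀ i, ∃ μ : M → Module.Dual ℝ (t i),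
      ∀ ξ : (t i), iω ξ = d (fun x => μ x ξ))
    (coAd : G → Module.Dual ℝ 𝔤 → Module.Dual ℝ 𝔤)
    (havg : ∀ μ : M → Module.Dual ℝ 𝔤, (∀ ξ : 𝔤, iω ξ = d (fun x => μ x ξ)) →
      ∃ μ' : M → Module.Dual ℝ 𝔤, (∀ ξ : 𝔤, iω ξ = d (fun x => μ' x ξ)) ∧
        ∀ (g : G) (x : M), μ' (g • x) = coAd g (μ' x)) :
    ∃ μ : M → Module.Dual ℝ 𝔤, (∀ ξ : 𝔤, iω ξ = d (fun x => μ x ξ)) ∧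
      ∀ (g : G) (x : M), μ (g • x) = coAd g (μ x) :=
  stmt18_general d iω t hcover hHam coAd havg
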